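/- arXiv:1506.04159 — 2 statements merged into one kernel-verified Lean document; each statement's English description precedes it below -/
import Mathlib

section
/- For a > b > 0, let C(a,b) = √(a²−b²)/arccosh(a/b) (capacity of a prolate conducting ellipsoid with semi-axes a, b) and A(a,b) = 2πb²(1 + (a/b)(arcsin e)/e) with e = √(1 − b²/a²) (its surface area), and let R_A = √(A/(4π)) be the area radius. Then C/R_A → ∞ as a/b → ∞; more precisely, for t = a/b, C/R_A = √2 √(t²−1) / (arccosh(t) √(1 + t·(arcsin e)/e)) tends to infinity as t → ∞. -/
open Real Filter

/-- Inverse hyperbolic cosine. -/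
noncomputable def arccosh (t : ℝ) : ℝ := Real.log (t + Real.sqrt (t ^ 2 - 1))

/-- Capacity of a prolate conducting ellipsoid with semi-axes `a > b`. -/
noncomputable def ellipsoidCap (a b : ℝ) : ℝ := Real.sqrt (a ^ 2 - b ^ 2) / arccosh (a / b)

/-- Eccentricity `e = √(1 − b²/a²)`. -/
noncomputable def ecc (a b : ℝ) : ℝ := Real.sqrt (1 - b ^ 2 / a ^ 2)

/-- Surface area of the prolate ellipsoid. -/
noncomputable def ellipsoidArea (a b : ℝ) : ℝ :=
  2 * π * b ^ 2 * (1 + (a / b) * Real.arcsin (ecc a b) / ecc a b)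

/-- Area radius `R_A = √(A/(4π))`. -/
noncomputable def areaRadius (a b : ℝ) : ℝ := Real.sqrt (ellipsoidArea a b / (4 * π))

/-- The ratio in terms of `t = a/b`. -/
noncomputable def ratioF (t : ℝ) : ℝ :=
  Real.sqrt 2 * Real.sqrt (t ^ 2 - 1) /
    (arccosh t * Real.sqrt (1 + t * Real.arcsin (Real.sqrt (1 - 1 / t ^ 2)) /
      Real.sqrt (1 - 1 / t ^ 2)))

open Topology

/-!
Writing `t = a / b`, both `C` and `R_A` scale like `b`, so `C / R_A` depends on `t` alone. As
`t → ∞` the eccentricity tends to `1`, so the area grows like `t` while `√(t² - 1) ∼ t` and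
`arccosh t ∼ log t`; hence `C / R_A ≳ √t / log t → ∞`. Concretely, for `t ≥ 2` the crude bounds
`√(t² - 1) ≥ t / 2`, `arccosh t ≤ log (2t) ≤ 2 log t` and `e ≥ 1 / 2` give
`C / R_A ≥ √t / (8 log t)`.
-/

noncomputable def eccOfRatio (t : ℝ) : ℝ := √(1 - 1 / t ^ 2)

noncomputable def areaFactor (t : ℝ) : ℝ := 1 + t * arcsin (eccOfRatio t) / eccOfRatio t

lemma arccosh_eq_arcosh : arccosh = Real.arcosh := rfl

lemma ratioF_eq (t : ℝ) :
    ratioF t = √2 * √(t ^ 2 - 1) / (arcosh t * √(areaFactor t)) := rfl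

lemma ecc_eq_eccOfRatio (a b : ℝ) : ecc a b = eccOfRatio (a / b) := by
  rw [ecc, eccOfRatio, one_div, div_pow, inv_div]

lemma ellipsoidArea_eq (a b : ℝ) :
    ellipsoidArea a b = 2 * π * b ^ 2 * areaFactor (a / b) := by
  rw [ellipsoidArea, ecc_eq_eccOfRatio, areaFactor]

lemma areaFactor_pos {t : ℝ} (ht : 0 ≤ t) : 0 < areaFactor t := by
  have he : 0 ≤ eccOfRatio t := sqrt_nonneg _
  have := arcsin_nonneg.2 he
  rw [areaFactor]
  positivity

lemma ellipsoidCap_eq {a b : ℝ} (hb : 0 < b) :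
    ellipsoidCap a b = b * √((a / b) ^ 2 - 1) / arcosh (a / b) := by
  have h : a ^ 2 - b ^ 2 = b ^ 2 * ((a / b) ^ 2 - 1) := by field_simp
  rw [ellipsoidCap, arccosh_eq_arcosh, h, sqrt_mul (sq_nonneg b), sqrt_sq hb.le]

lemma areaRadius_eq {a b : ℝ} (hb : 0 ≤ b) :
    areaRadius a b = b * √(areaFactor (a / b)) / √2 := by
  have h : ellipsoidArea a b / (4 * π) = b ^ 2 * (areaFactor (a / b) / 2) := by
    rw [ellipsoidArea_eq]
    field_simp
    ring
  rw [areaRadius, h, sqrt_mul (sq_nonneg b), sqrt_sq hb, sqrt_div' _ zero_le_two, mul_div_assoc]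

lemma ellipsoidCap_div_areaRadius (a : ℝ) {b : ℝ} (hb : 0 < b) :
    ellipsoidCap a b / areaRadius a b = ratioF (a / b) := by
  rw [ellipsoidCap_eq hb, areaRadius_eq hb.le, ratioF_eq]
  rcases eq_or_ne √(areaFactor (a / b)) 0 with hF | hF
  · simp [hF]
  · field_simp

lemma half_le_eccOfRatio {t : ℝ} (ht : 2 ≤ t) : 1 / 2 ≤ eccOfRatio t := by
  have h : 1 / t ^ 2 ≤ 1 / 4 := one_div_le_one_div_of_le (by norm_num) (by nlinarith)
  rw [eccOfRatio, le_sqrt' (by norm_num)]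
  linarith

lemma areaFactor_le {t : ℝ} (ht : 2 ≤ t) : areaFactor t ≤ 8 * t := by
  have he := half_le_eccOfRatio ht
  have h : arcsin (eccOfRatio t) / eccOfRatio t ≤ 4 :=
    calc arcsin (eccOfRatio t) / eccOfRatio t ≤ (π / 2) / (1 / 2) :=
          div_le_div₀ (by positivity) (arcsin_le_pi_div_two _) (by norm_num) he
      _ ≤ 4 := by linarith [pi_le_four]
  rw [areaFactor, mul_div_assoc]
  nlinarith

lemma arcosh_le_log_two_mul {t : ℝ} (ht : 0 < t) : arcosh t ≤ log (2 * t) := by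
  have h : √(t ^ 2 - 1) ≤ t := (sqrt_le_left ht.le).2 (by linarith)
  exact log_le_log (by positivity) (by linarith)

lemma half_le_sqrt_sq_sub_one {t : ℝ} (ht : 2 ≤ t) : t / 2 ≤ √(t ^ 2 - 1) := by
  rw [le_sqrt' (by linarith)]
  nlinarith

lemma sqrt_div_log_le_ratioF {t : ℝ} (ht : 2 ≤ t) : √t / (8 * log t) ≤ ratioF t := by
  have ht0 : 0 < t := by linarith
  have hlog : 0 < log t := log_pos (by linarith)
  have harcosh : arcosh t ≤ 2 * log t :=
    calc arcosh t ≤ log (2 * t) := arcosh_le_log_two_mul ht0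
      _ = log 2 + log t := log_mul two_ne_zero ht0.ne'
      _ ≤ 2 * log t := by linarith [log_le_log two_pos ht]
  have hF : √(areaFactor t) ≤ √(8 * t) := sqrt_le_sqrt (areaFactor_le ht)
  have hF0 : 0 < √(areaFactor t) := sqrt_pos.2 (areaFactor_pos ht0.le)
  have hsqrt8 : √(8 * t) = 2 * √2 * √t := by
    rw [show (8 : ℝ) * t = 2 ^ 2 * (2 * t) by ring, sqrt_mul (by positivity), sqrt_sq zero_le_two,
      sqrt_mul zero_le_two, mul_assoc]
  calc √t / (8 * log t) = √2 * (t / 2) / (2 * log t * √(8 * t)) := by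
        rw [hsqrt8]
        field_simp
        rw [sq_sqrt ht0.le]
        ring
    _ ≤ √2 * √(t ^ 2 - 1) / (arcosh t * √(areaFactor t)) := by
        gcongr
        · exact mul_pos (arcosh_pos (by linarith)) hF0
        · exact half_le_sqrt_sq_sub_one ht
    _ = ratioF t := (ratioF_eq t).symm

lemma tendsto_sqrt_div_log_atTop : Tendsto (fun t : ℝ ↦ √t / log t) atTop atTop := by
  have h : Tendsto (fun t : ℝ ↦ log t / √t) atTop (𝓝[>] 0) := by
    refine tendsto_nhdsWithin_of_tendsto_nhds_of_eventually_within _ ?_ ?_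
    · simpa only [sqrt_eq_rpow] using
        (isLittleO_log_rpow_atTop one_half_pos).tendsto_div_nhds_zero
    · filter_upwards [eventually_gt_atTop 1] with t ht
      exact div_pos (log_pos ht) (sqrt_pos.2 (by linarith))
  exact h.inv_tendsto_nhdsGT_zero.congr fun t ↦ by simp only [Pi.inv_apply, inv_div]

lemma tendsto_ratioF_atTop : Tendsto ratioF atTop atTop := by
  have h : Tendsto (fun t : ℝ ↦ √t / (8 * log t)) atTop atTop := by
    simpa only [div_div, mul_comm] using
      tendsto_sqrt_div_log_atTop.atTop_div_const (by norm_num : (0 : ℝ) < 8)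
  exact tendsto_atTop_mono' atTop
    (eventually_ge_atTop 2 |>.mono fun _ ↦ sqrt_div_log_le_ratioF) h

/-- For a prolate ellipsoid, `C/R_A` depends only on `t = a/b` via `ratioF`, and
`C/R_A → ∞` as `a/b → ∞`: the capacity bound fails for the area radius. -/
theorem ellipsoid_capacity_area_radius_unbounded :
    (∀ a b : ℝ, 0 < b → b < a → ellipsoidCap a b / areaRadius a b = ratioF (a / b)) ∧
      Tendsto ratioF atTop atTop :=
  ⟨fun _ _ hb _ ↦ ellipsoidCap_div_areaRadius _ hb, tendsto_ratioF_atTop⟩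
end

section
/- Let U ⊆ ℝ³, let T : ℝ³ → (symmetric bilinear forms on ℝ⁴) be a measurable energy-momentum tensor field satisfying the dominant energy condition pointwise, let t = (1,0,0,0), and let η(x) = k × x be the rotational Killing field about a unit axis k, with U contained in the cylinder {x : |k × x| ≤ R}. Then J(U) := ∫_U T(t, η(x)) dx ≤ R ∫_U T(t, t) dx =: R · E(U). -/
open MeasureTheory

noncomputable def dot3 (a b : Fin 3 → ℝ) : ℝ := a 0 * b 0 + a 1 * b 1 + a 2 * b 2

noncomputable def cross3 (a b : Fin 3 → ℝ) : Fin 3 → ℝ :=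
  ![a 1 * b 2 - a 2 * b 1, a 2 * b 0 - a 0 * b 2, a 0 * b 1 - a 1 * b 0]

noncomputable def norm3 (a : Fin 3 → ℝ) : ℝ := Real.sqrt (dot3 a a)

/-- The Minkowski inner product on ℝ⁴ with signature `(−,+,+,+)`. -/
noncomputable def mink (v w : Fin 4 → ℝ) : ℝ :=
  -(v 0 * w 0) + v 1 * w 1 + v 2 * w 2 + v 3 * w 3

/-- A vector is future-directed causal if `m(v,v) ≤ 0` and `v⁰ > 0`. -/
def FutureCausal (v : Fin 4 → ℝ) : Prop := mink v v ≤ 0 ∧ 0 < v 0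

/-- The spatial embedding of a 3-vector into Minkowski space. -/
noncomputable def spat (v : Fin 3 → ℝ) : Fin 4 → ℝ := ![0, v 0, v 1, v 2]

lemma t_causal : FutureCausal ![1, 0, 0, 0] := by
  constructor
  · simp [mink]
  · simp

lemma shifted_causal (R : ℝ) (hR : 0 < R) (v : Fin 3 → ℝ) (hv : norm3 v ≤ R) :
    FutureCausal (R • ![(1:ℝ), 0, 0, 0] - spat v) := by
  have hd : 0 ≤ dot3 v v := by
    unfold dot3; nlinarith [sq_nonneg (v 0), sq_nonneg (v 1), sq_nonneg (v 2)]
  have hdv : dot3 v v ≤ R ^ 2 := by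
    have h1 : Real.sqrt (dot3 v v) ≤ R := hv
    nlinarith [Real.sq_sqrt hd, Real.sqrt_nonneg (dot3 v v)]
  have e0 : (R • ![(1:ℝ),0,0,0] - spat v) 0 = R := by simp [spat]
  have e1 : (R • ![(1:ℝ),0,0,0] - spat v) 1 = -v 0 := by simp [spat]
  have e2 : (R • ![(1:ℝ),0,0,0] - spat v) 2 = -v 1 := by
    show R * (![(1:ℝ),0,0,0] 2) - (spat v) 2 = -v 1
    show R * 0 - v 1 = -v 1; ring
  have e3 : (R • ![(1:ℝ),0,0,0] - spat v) 3 = -v 2 := by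
    show R * (![(1:ℝ),0,0,0] 3) - (spat v) 3 = -v 2
    show R * 0 - v 2 = -v 2; ring
  constructor
  · show mink _ _ ≤ 0
    unfold mink
    rw [e0, e1, e2, e3]
    unfold dot3 at hdv
    nlinarith
  · rw [show (R • ![(1:ℝ),0,0,0] - spat v) 0 = R from e0] at *
    exact hR

/-- For any energy-momentum tensor field satisfying the dominant energy condition pointwise,
with `t = (1,0,0,0)` and rotational Killing field `η(x) = k × x`, if `U` lies in the
cylinder `{|k × x| ≤ R}`, then `J(U) = ∫_U T(t, η) ≤ R ∫_U T(t,t) = R·E(U)`. -/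
theorem dec_angular_momentum_integral (R : ℝ) (hR : 0 < R)
    (U : Set (Fin 3 → ℝ)) (hU : MeasurableSet U)
    (k : Fin 3 → ℝ) (hk : norm3 k = 1)
    (hcyl : U ⊆ {x | norm3 (cross3 k x) ≤ R})
    (T : (Fin 3 → ℝ) → (Fin 4 → ℝ) →ₗ[ℝ] (Fin 4 → ℝ) →ₗ[ℝ] ℝ)
    (hsymm : ∀ x v w, T x v w = T x w v)
    (hdec : ∀ x ξ ℓ, FutureCausal ξ → FutureCausal ℓ → 0 ≤ T x ξ ℓ)
    (hJint : IntegrableOn (fun x => T x ![1, 0, 0, 0] (spat (cross3 k x))) U volume)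
    (hEint : IntegrableOn (fun x => T x ![1, 0, 0, 0] ![1, 0, 0, 0]) U volume) :
    ∫ x in U, T x ![1, 0, 0, 0] (spat (cross3 k x)) ≤
      R * ∫ x in U, T x ![1, 0, 0, 0] ![1, 0, 0, 0] := by
  have key : ∀ x ∈ U, T x ![1,0,0,0] (spat (cross3 k x)) ≤ R * T x ![1,0,0,0] ![1,0,0,0] := by
    intro x hx
    have hc := shifted_causal R hR (cross3 k x) (hcyl hx)
    have h0 := hdec x _ _ t_causal hc
    rw [map_sub, _root_.map_smul] at h0
    simp only [smul_eq_mul] at h0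
    linarith
  calc ∫ x in U, T x ![1,0,0,0] (spat (cross3 k x))
      ≤ ∫ x in U, R * T x ![1,0,0,0] ![1,0,0,0] :=
        setIntegral_mono_on hJint (hEint.const_mul R) hU key
    _ = R * ∫ x in U, T x ![1,0,0,0] ![1,0,0,0] := integral_const_mul R _
end
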